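/- arXiv:2411.01302 — 4 statements merged into one kernel-verified Lean document; each statement's English description precedes it below -/
import Mathlib

section
/- For all z, z' ∈ ℝ^d with |z| ≤ C: |∫_𝒜 r(a) (π_{z'}(a) − π_z(a)) da| ≤ 2R ((B/γ) · exp(3(BC + R)/γ) + 1/C) · |z' − z|. -/
/-!
Write `π_z = w_z / Z_z` with `w_z(a) = exp((f(a)·z + r(a))/γ)`. Pointwise
`|w_{z'} - w_z| ≤ δ e^δ w_{z'}` with `δ = B‖z' - z‖/γ`, by the mean value bound for `exp`. For the
average `c = ∫ r π_z`, which satisfies `|c| ≤ R`, one has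
`∫ r (π_{z'} - π_z) = Z_{z'}⁻¹ ∫ (r - c)(w_{z'} - w_z)`, hence the bound `2R δ e^δ`; this settles
`‖z' - z‖ ≤ C`. Otherwise the trivial bound `2R ≤ 2R‖z' - z‖/C` suffices.
-/

open MeasureTheory
open scoped RealInnerProductSpace

/-- The Gibbs probability density `π_z(a) ∝ exp((f(a)·z + r(a))/γ)` on the set `𝒜`. -/
noncomputable def gibbs {m d : ℕ} (𝒜 : Set (EuclideanSpace ℝ (Fin m))) (γ : ℝ)
    (f : EuclideanSpace ℝ (Fin m) → EuclideanSpace ℝ (Fin d))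
    (r : EuclideanSpace ℝ (Fin m) → ℝ)
    (z : EuclideanSpace ℝ (Fin d)) (a : EuclideanSpace ℝ (Fin m)) : ℝ :=
  Real.exp ((⟪f a, z⟫ + r a) / γ) /
    ∫ a' in 𝒜, Real.exp ((⟪f a', z⟫ + r a') / γ)

open Real

theorem Real.abs_exp_sub_exp_le (x y : ℝ) : |exp x - exp y| ≤ |x - y| * exp (max x y) := by
  wlog hyx : y ≤ x generalizing x y
  · rw [abs_sub_comm, abs_sub_comm x, max_comm]
    exact this y x (le_of_not_ge hyx)
  rw [max_eq_left hyx, abs_of_nonneg (sub_nonneg.2 hyx),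
    abs_of_nonneg (sub_nonneg.2 (exp_le_exp.2 hyx))]
  have hexp_y : exp y = exp (y - x) * exp x := by rw [← exp_add, sub_add_cancel]
  nlinarith [add_one_le_exp (y - x), exp_pos x]

section NormalizedWeights

variable {α : Type*} [MeasurableSpace α] {μ : Measure α} {r w w' : α → ℝ} {R K : ℝ}

lemma MeasureTheory.Integrable.bdd_mul_of_abs_le (hw : Integrable w μ)
    (hr : AEStronglyMeasurable r μ) (hrR : ∀ᵐ a ∂μ, |r a| ≤ R) :
    Integrable (fun a => r a * w a) μ :=
  hw.bdd_mul hr (by simpa only [Real.norm_eq_abs] using hrR)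

lemma abs_integral_mul_le_mul_integral (hw : Integrable w μ) (hw0 : 0 ≤ᵐ[μ] w)
    (hrR : ∀ᵐ a ∂μ, |r a| ≤ R) : |∫ a, r a * w a ∂μ| ≤ R * ∫ a, w a ∂μ := by
  rw [← Real.norm_eq_abs, ← integral_const_mul]
  refine norm_integral_le_of_norm_le (hw.const_mul R) ?_
  filter_upwards [hw0, hrR] with a hwa hra
  rw [Real.norm_eq_abs, abs_mul, abs_of_nonneg hwa]
  exact mul_le_mul_of_nonneg_right hra hwa

lemma abs_integral_mul_div_integral_le (hw : Integrable w μ) (hw0 : 0 ≤ᵐ[μ] w)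
    (hZ : 0 < ∫ a, w a ∂μ) (hrR : ∀ᵐ a ∂μ, |r a| ≤ R) :
    |(∫ a, r a * w a ∂μ) / ∫ a, w a ∂μ| ≤ R := by
  rw [abs_div, abs_of_pos hZ, div_le_iff₀ hZ]
  exact abs_integral_mul_le_mul_integral hw hw0 hrR

lemma integral_mul_div_integral_sub_div_integral (hr : AEStronglyMeasurable r μ)
    (hrR : ∀ᵐ a ∂μ, |r a| ≤ R) (hw : Integrable w μ) (hw' : Integrable w' μ) :
    ∫ a, r a * (w' a / ∫ b, w' b ∂μ - w a / ∫ b, w b ∂μ) ∂μ =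
      (∫ a, r a * w' a ∂μ) / (∫ a, w' a ∂μ) - (∫ a, r a * w a ∂μ) / ∫ a, w a ∂μ := by
  simp only [mul_sub, ← mul_div_assoc]
  rw [integral_sub ((hw'.bdd_mul_of_abs_le hr hrR).div_const _)
    ((hw.bdd_mul_of_abs_le hr hrR).div_const _), integral_div, integral_div]

lemma abs_integral_mul_normalized_sub_le (hr : AEStronglyMeasurable r μ)
    (hrR : ∀ᵐ a ∂μ, |r a| ≤ R) (hw : Integrable w μ) (hw' : Integrable w' μ)
    (hw0 : 0 ≤ᵐ[μ] w) (hw0' : 0 ≤ᵐ[μ] w') (hZ : 0 < ∫ a, w a ∂μ) (hZ' : 0 < ∫ a, w' a ∂μ) :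
    |∫ a, r a * (w' a / ∫ b, w' b ∂μ - w a / ∫ b, w b ∂μ) ∂μ| ≤ 2 * R := by
  rw [integral_mul_div_integral_sub_div_integral hr hrR hw hw', two_mul]
  exact (abs_sub _ _).trans (add_le_add (abs_integral_mul_div_integral_le hw' hw0' hZ' hrR)
    (abs_integral_mul_div_integral_le hw hw0 hZ hrR))

lemma abs_integral_mul_normalized_sub_le_of_abs_sub_le (hr : AEStronglyMeasurable r μ)
    (hrR : ∀ᵐ a ∂μ, |r a| ≤ R) (hw : Integrable w μ) (hw' : Integrable w' μ)
    (hw0 : 0 ≤ᵐ[μ] w) (hZ : 0 < ∫ a, w a ∂μ) (hZ' : 0 < ∫ a, w' a ∂μ)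
    (hK : ∀ᵐ a ∂μ, |w' a - w a| ≤ K * w' a) :
    |∫ a, r a * (w' a / ∫ b, w' b ∂μ - w a / ∫ b, w b ∂μ) ∂μ| ≤ 2 * R * K := by
  rw [integral_mul_div_integral_sub_div_integral hr hrR hw hw']
  set c := (∫ a, r a * w a ∂μ) / ∫ a, w a ∂μ
  have hc : |c| ≤ R := abs_integral_mul_div_integral_le hw hw0 hZ hrR
  have hrw := hw.bdd_mul_of_abs_le hr hrR
  have hrw' := hw'.bdd_mul_of_abs_le hr hrR
  -- Centering `r` at `c` makes the `w`-part of the difference vanish.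
  have hcentered :
      ∫ a, (r a - c) * (w' a - w a) ∂μ = (∫ a, r a * w' a ∂μ) - c * ∫ a, w' a ∂μ := by
    have hexpand : ∀ a, (r a - c) * (w' a - w a) = (r a * w' a - r a * w a) - c * (w' a - w a) :=
      fun a => by ring
    simp only [hexpand]
    rw [integral_sub (f := fun a => r a * w' a - r a * w a)
      (g := fun a => c * (w' a - w a)) (hrw'.sub hrw)
      ((hw'.sub hw).const_mul c), integral_sub hrw' hrw,
      integral_const_mul, integral_sub hw' hw]
    have hcZ : c * ∫ a, w a ∂μ = ∫ a, r a * w a ∂μ := div_mul_cancel₀ _ hZ.ne'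
    linear_combination hcZ
  have hbound : |∫ a, (r a - c) * (w' a - w a) ∂μ| ≤ 2 * R * K * ∫ a, w' a ∂μ := by
    rw [← Real.norm_eq_abs, ← integral_const_mul]
    refine norm_integral_le_of_norm_le (hw'.const_mul _) ?_
    filter_upwards [hrR, hK] with a hra hKa
    rw [Real.norm_eq_abs, abs_mul, mul_assoc]
    exact mul_le_mul (by linarith [abs_sub (r a) c]) hKa (abs_nonneg _)
      (by linarith [abs_nonneg c])
  have hdiff : (∫ a, r a * w' a ∂μ) / (∫ a, w' a ∂μ) - c =
      (∫ a, (r a - c) * (w' a - w a) ∂μ) / ∫ a, w' a ∂μ := by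
    rw [hcentered]
    field_simp
  rw [hdiff, abs_div, abs_of_pos hZ', div_le_iff₀ hZ']
  exact hbound

end NormalizedWeights

section GibbsWeight

variable {α E : Type*} [NormedAddCommGroup E] [InnerProductSpace ℝ E] {γ B R : ℝ}
  {f : α → E} {r : α → ℝ}

noncomputable def gibbsWeight (γ : ℝ) (f : α → E) (r : α → ℝ) (z : E) (a : α) : ℝ :=
  exp ((⟪f a, z⟫ + r a) / γ)

lemma gibbsWeight_pos (z : E) (a : α) : 0 < gibbsWeight γ f r z a := exp_pos _

lemma abs_gibbsWeight_sub_le (hγ : 0 < γ) {a : α} (hfa : ‖f a‖ ≤ B) (z z' : E) :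
    |gibbsWeight γ f r z' a - gibbsWeight γ f r z a| ≤
      B * ‖z' - z‖ / γ * exp (B * ‖z' - z‖ / γ) * gibbsWeight γ f r z' a := by
  set x := (⟪f a, z'⟫ + r a) / γ
  set y := (⟪f a, z⟫ + r a) / γ
  have hxy : |x - y| ≤ B * ‖z' - z‖ / γ := by
    have hsub : x - y = ⟪f a, z' - z⟫ / γ := by simp only [x, y, inner_sub_right]; ring
    rw [hsub, abs_div, abs_of_pos hγ]
    gcongr
    exact (abs_real_inner_le_norm _ _).trans (by gcongr)
  have hδ : 0 ≤ B * ‖z' - z‖ / γ := (abs_nonneg _).trans hxy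
  have hmax : max x y ≤ x + B * ‖z' - z‖ / γ :=
    max_le (by linarith [abs_nonneg (x - y)]) (by linarith [neg_abs_le (x - y)])
  calc |exp x - exp y| ≤ |x - y| * exp (max x y) := Real.abs_exp_sub_exp_le x y
    _ ≤ B * ‖z' - z‖ / γ * exp (x + B * ‖z' - z‖ / γ) := by gcongr
    _ = _ := by rw [exp_add]; unfold gibbsWeight; ring

variable [MeasurableSpace α] {μ : Measure α}

lemma integrable_gibbsWeight [IsFiniteMeasure μ] (hγ : 0 < γ) (hf : AEStronglyMeasurable f μ)
    (hr : AEStronglyMeasurable r μ) (hfB : ∀ᵐ a ∂μ, ‖f a‖ ≤ B) (hrR : ∀ᵐ a ∂μ, |r a| ≤ R)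
    (z : E) : Integrable (gibbsWeight γ f r z) μ := by
  refine .of_bound (by unfold gibbsWeight; fun_prop) (exp ((B * ‖z‖ + R) / γ)) ?_
  filter_upwards [hfB, hrR] with a hfa hra
  rw [Real.norm_eq_abs, abs_of_pos (gibbsWeight_pos z a)]
  unfold gibbsWeight
  gcongr exp (?_ / _)
  calc ⟪f a, z⟫ + r a ≤ ‖f a‖ * ‖z‖ + |r a| := add_le_add (real_inner_le_norm _ _) (le_abs_self _)
    _ ≤ B * ‖z‖ + R := by gcongr

end GibbsWeight

theorem stmt3_general {m d : ℕ}
    (𝒜 : Set (EuclideanSpace ℝ (Fin m)))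
    (h𝒜 : IsCompact 𝒜) (h𝒜0 : 0 < volume 𝒜)
    (γ C B R : ℝ) (hγ : 0 < γ) (hC : 0 < C) (hB : 0 < B) (hR : 0 < R)
    (f : EuclideanSpace ℝ (Fin m) → EuclideanSpace ℝ (Fin d))
    (r : EuclideanSpace ℝ (Fin m) → ℝ)
    (hf : Measurable f) (hr : Measurable r)
    (hfB : ∀ a ∈ 𝒜, ‖f a‖ ≤ B) (hrR : ∀ a ∈ 𝒜, |r a| ≤ R)
    (z z' : EuclideanSpace ℝ (Fin d)) :
    |∫ a in 𝒜, r a * (gibbs 𝒜 γ f r z' a - gibbs 𝒜 γ f r z a)| ≤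
      2 * R * (B / γ * Real.exp (3 * (B * C + R) / γ) + 1 / C) * ‖z' - z‖ := by
  have : IsFiniteMeasure (volume.restrict 𝒜) := isFiniteMeasure_restrict.2 h𝒜.measure_lt_top.ne
  have : NeZero (volume.restrict 𝒜) := ⟨Measure.restrict_eq_zero.not.2 h𝒜0.ne'⟩
  have hfB' := ae_restrict_of_forall_mem (μ := volume) h𝒜.measurableSet hfB
  have hrR' := ae_restrict_of_forall_mem (μ := volume) h𝒜.measurableSet hrR
  have hw := integrable_gibbsWeight hγ hf.aestronglyMeasurable hr.aestronglyMeasurable hfB' hrR'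
  have hw0 z : 0 ≤ᵐ[volume.restrict 𝒜] gibbsWeight γ f r z :=
    ae_of_all _ fun a => (gibbsWeight_pos z a).le
  have hZ z : 0 < ∫ a in 𝒜, gibbsWeight γ f r z a := integral_exp_pos (hw z)
  rcases le_or_gt ‖z' - z‖ C with hδ | hδ
  · have hexp : exp (B * ‖z' - z‖ / γ) ≤ exp (3 * (B * C + R) / γ) := by
      gcongr exp (?_ / _)
      nlinarith [mul_le_mul_of_nonneg_left hδ hB.le, mul_pos hB hC]
    calc _ ≤ 2 * R * (B * ‖z' - z‖ / γ * exp (B * ‖z' - z‖ / γ)) :=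
          abs_integral_mul_normalized_sub_le_of_abs_sub_le hr.aestronglyMeasurable hrR' (hw z)
            (hw z') (hw0 z) (hZ z) (hZ z')
            (hfB'.mono fun a hfa => abs_gibbsWeight_sub_le hγ hfa z z')
      _ = 2 * R * (B / γ * exp (B * ‖z' - z‖ / γ)) * ‖z' - z‖ := by ring
      _ ≤ _ := by
          gcongr
          linarith [mul_le_mul_of_nonneg_left hexp (div_pos hB hγ).le, one_div_pos.2 hC]
  · calc _ ≤ 2 * R :=
          abs_integral_mul_normalized_sub_le hr.aestronglyMeasurable hrR' (hw z) (hw z')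
            (hw0 z) (hw0 z') (hZ z) (hZ z')
      _ = 2 * R * (1 / C) * C := by field_simp
      _ ≤ _ := by
          gcongr
          exact le_add_of_nonneg_left (by positivity)

theorem stmt3 {m d : ℕ}
    (𝒜 : Set (EuclideanSpace ℝ (Fin m)))
    (h𝒜 : IsCompact 𝒜) (h𝒜0 : 0 < volume 𝒜) (h𝒜fin : volume 𝒜 < ⊤)
    (γ C B R : ℝ) (hγ : 0 < γ) (hC : 0 < C) (hB : 0 < B) (hR : 0 < R)
    (f : EuclideanSpace ℝ (Fin m) → EuclideanSpace ℝ (Fin d))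
    (r : EuclideanSpace ℝ (Fin m) → ℝ)
    (hf : Measurable f) (hr : Measurable r)
    (hfB : ∀ a ∈ 𝒜, ‖f a‖ ≤ B) (hrR : ∀ a ∈ 𝒜, |r a| ≤ R)
    (z z' : EuclideanSpace ℝ (Fin d)) (hz : ‖z‖ ≤ C) :
    |∫ a in 𝒜, r a * (gibbs 𝒜 γ f r z' a - gibbs 𝒜 γ f r z a)| ≤
      2 * R * (B / γ * Real.exp (3 * (B * C + R) / γ) + 1 / C) * ‖z' - z‖ :=
  stmt3_general 𝒜 h𝒜 h𝒜0 γ C B R hγ hC hB hR f r hf hr hfB hrR z z'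
end

section
/- For all z, z' ∈ ℝ^d with |z| ≤ C and |z'| > 2C: |log(∫_𝒜 exp((f(a)·z' + r(a))/γ) da / ∫_𝒜 exp((f(a)·z + r(a))/γ) da)| ≤ ((3B + 2R/C)/γ) · |z' − z|. -/
open MeasureTheory
open scoped RealInnerProductSpace

/-! The exponents at `z'` and at `z` differ by `⟪f a, z' - z⟫ / γ`, which is at most
`B ‖z' - z‖ / γ` in absolute value, so each of the two integrals is at most `exp (B ‖z' - z‖ / γ)`
times the other. This gives the Lipschitz bound with constant `B / γ ≤ (3B + 2R/C) / γ`. -/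

namespace Real

theorem abs_log_div_le_of_le_exp_mul {x y L : ℝ} (hL : 0 ≤ L) (hx : 0 ≤ x) (hy : 0 ≤ y)
    (hxy : x ≤ exp L * y) (hyx : y ≤ exp L * x) : |log (x / y)| ≤ L := by
  rcases hy.eq_or_lt with rfl | hy
  -- `x / 0 = 0` and `log 0 = 0`
  · simpa using hL
  have hx : 0 < x := hx.lt_of_ne (by rintro rfl; linarith)
  have hxy' : x / y ≤ exp L := (div_le_iff₀ hy).2 hxy
  have hyx' : exp (-L) ≤ x / y := by
    rw [le_div_iff₀ hy, exp_neg, inv_mul_le_iff₀ (exp_pos L)]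
    exact hyx
  rw [abs_le]
  constructor
  · exact (le_log_iff_exp_le (by positivity)).2 hyx'
  · exact (log_le_iff_le_exp (by positivity)).2 hxy'

end Real

section

variable {α : Type*} [MeasurableSpace α] {μ : Measure α}

theorem integral_exp_le_exp_mul_integral_exp {φ ψ : α → ℝ} {L : ℝ}
    (hψ : Integrable (fun a => Real.exp (ψ a)) μ) (h : ∀ᵐ a ∂μ, φ a - ψ a ≤ L) :
    ∫ a, Real.exp (φ a) ∂μ ≤ Real.exp L * ∫ a, Real.exp (ψ a) ∂μ := by
  rw [← integral_const_mul]
  refine integral_mono_of_nonneg (.of_forall fun a => (Real.exp_pos _).le) (hψ.const_mul _) ?_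
  filter_upwards [h] with a ha
  rw [← Real.exp_add, Real.exp_le_exp]
  linarith

theorem abs_log_integral_exp_div_le {φ ψ : α → ℝ} {L : ℝ} (hL : 0 ≤ L)
    (hφ : Integrable (fun a => Real.exp (φ a)) μ) (hψ : Integrable (fun a => Real.exp (ψ a)) μ)
    (h : ∀ᵐ a ∂μ, |φ a - ψ a| ≤ L) :
    |Real.log ((∫ a, Real.exp (φ a) ∂μ) / ∫ a, Real.exp (ψ a) ∂μ)| ≤ L := by
  refine Real.abs_log_div_le_of_le_exp_mul hL
    (integral_nonneg fun a => (Real.exp_pos _).le) (integral_nonneg fun a => (Real.exp_pos _).le)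
    (integral_exp_le_exp_mul_integral_exp hψ ?_) (integral_exp_le_exp_mul_integral_exp hφ ?_)
  · filter_upwards [h] with a ha using le_of_abs_le ha
  · filter_upwards [h] with a ha using le_of_abs_le ((abs_sub_comm _ _).trans_le ha)

theorem integrableOn_exp_of_le {s : Set α} {g : α → ℝ} {M : ℝ} (hs : MeasurableSet s)
    (hμs : μ s ≠ ⊤) (hg : Measurable g) (hgM : ∀ a ∈ s, g a ≤ M) :
    IntegrableOn (fun a => Real.exp (g a)) s μ := by
  refine Measure.integrableOn_of_bounded hμs (hg.exp.aestronglyMeasurable) (M := Real.exp M) ?_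
  filter_upwards [ae_restrict_mem hs] with a ha
  rw [Real.norm_eq_abs, abs_of_pos (Real.exp_pos _)]
  exact Real.exp_le_exp.2 (hgM a ha)

end

theorem abs_inner_le_of_norm_le {E : Type*} [NormedAddCommGroup E] [InnerProductSpace ℝ E]
    {x : E} {B : ℝ} (hx : ‖x‖ ≤ B) (y : E) : |⟪x, y⟫| ≤ B * ‖y‖ :=
  (abs_real_inner_le_norm x y).trans (mul_le_mul_of_nonneg_right hx (norm_nonneg y))

theorem stmt8_general {m d : ℕ}
    (𝒜 : Set (EuclideanSpace ℝ (Fin m)))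
    (h𝒜 : IsCompact 𝒜)
    (γ C B R : ℝ) (hγ : 0 < γ) (hC : 0 < C) (hB : 0 < B) (hR : 0 < R)
    (f : EuclideanSpace ℝ (Fin m) → EuclideanSpace ℝ (Fin d))
    (r : EuclideanSpace ℝ (Fin m) → ℝ)
    (hf : Measurable f) (hr : Measurable r)
    (hfB : ∀ a ∈ 𝒜, ‖f a‖ ≤ B) (hrR : ∀ a ∈ 𝒜, |r a| ≤ R)
    (z z' : EuclideanSpace ℝ (Fin d)) :
    |Real.log ((∫ a in 𝒜, Real.exp ((⟪f a, z'⟫ + r a) / γ)) /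
          ∫ a in 𝒜, Real.exp ((⟪f a, z⟫ + r a) / γ))| ≤
      (3 * B + 2 * R / C) / γ * ‖z' - z‖ := by
  have h𝒜m : MeasurableSet 𝒜 := h𝒜.isClosed.measurableSet
  have hint : ∀ w, IntegrableOn (fun a => Real.exp ((⟪f a, w⟫ + r a) / γ)) 𝒜 := by
    intro w
    refine integrableOn_exp_of_le h𝒜m h𝒜.measure_lt_top.ne (M := (B * ‖w‖ + R) / γ)
      ((((continuous_id.inner continuous_const).measurable.comp hf).add hr).div_const γ) ?_
    intro a ha
    have hinner : ⟪f a, w⟫ ≤ B * ‖w‖ :=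
      (le_abs_self _).trans (abs_inner_le_of_norm_le (hfB a ha) w)
    have hra : r a ≤ R := le_of_abs_le (hrR a ha)
    gcongr
  have hdiff : ∀ a ∈ 𝒜, |(⟪f a, z'⟫ + r a) / γ - (⟪f a, z⟫ + r a) / γ| ≤ B / γ * ‖z' - z‖ := by
    intro a ha
    rw [← sub_div, add_sub_add_right_eq_sub, ← inner_sub_right, abs_div, abs_of_pos hγ,
      div_mul_eq_mul_div]
    exact div_le_div_of_nonneg_right (abs_inner_le_of_norm_le (hfB a ha) _) hγ.le
  calc _ ≤ B / γ * ‖z' - z‖ :=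
        abs_log_integral_exp_div_le (by positivity) (hint z') (hint z)
          (ae_restrict_of_forall_mem h𝒜m hdiff)
    _ ≤ (3 * B + 2 * R / C) / γ * ‖z' - z‖ := by
        gcongr
        linarith [show 0 < 2 * R / C by positivity]

theorem stmt8 {m d : ℕ}
    (𝒜 : Set (EuclideanSpace ℝ (Fin m)))
    (h𝒜 : IsCompact 𝒜) (h𝒜0 : 0 < volume 𝒜) (h𝒜fin : volume 𝒜 < ⊤)
    (γ C B R : ℝ) (hγ : 0 < γ) (hC : 0 < C) (hB : 0 < B) (hR : 0 < R)
    (f : EuclideanSpace ℝ (Fin m) → EuclideanSpace ℝ (Fin d))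
    (r : EuclideanSpace ℝ (Fin m) → ℝ)
    (hf : Measurable f) (hr : Measurable r)
    (hfB : ∀ a ∈ 𝒜, ‖f a‖ ≤ B) (hrR : ∀ a ∈ 𝒜, |r a| ≤ R)
    (z z' : EuclideanSpace ℝ (Fin d)) (hz : ‖z‖ ≤ C) (hz' : 2 * C < ‖z'‖) :
    |Real.log ((∫ a in 𝒜, Real.exp ((⟪f a, z'⟫ + r a) / γ)) /
          ∫ a in 𝒜, Real.exp ((⟪f a, z⟫ + r a) / γ))| ≤
      (3 * B + 2 * R / C) / γ * ‖z' - z‖ :=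
  stmt8_general 𝒜 h𝒜 γ C B R hγ hC hB hR f r hf hr hfB hrR z z'
end

section
/- For every z' ∈ ℝ^d with |z'| ≤ C, the differential entropies of the two Gibbs densities satisfy γ · |∫_𝒜 log ρ_{z'}(a) · ρ_{z'}(a) da − ∫_𝒜 log π_{z'}(a) · π_{z'}(a) da| ≤ 2(1 + ((BC + R)/γ) · exp(2(BC + R)/γ)) · sup_{a∈𝒜} |(f(a) − g(a))·z'|. -/
/-!
With `u = (f·z' + r)/γ` and `v = (g·z' + r)/γ` we have `π = e^u / Z_u`, `ρ = e^v / Z_v`,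
`|u|, |v| ≤ M := (BC + R)/γ` and `|u - v| ≤ ε := sup |(f - g)·z'| / γ`. Since
`log π = u - log Z_u`, the entropy difference splits as
`∫ (v - u) ρ + ∫ u (ρ - π) - (log Z_v - log Z_u)`.
The first and last terms are at most `ε`; the middle one is at most `M ‖ρ - π‖₁`, and
`‖ρ - π‖₁ ≤ 2 ‖e^v - e^u‖₁ / Z_v ≤ 2 e^{2M} ε` because `Z_v ≥ |𝒜| e^{-M}` and `exp` is
`e^M`-Lipschitz on `(-∞, M]`.
-/

open MeasureTheory
open scoped RealInnerProductSpace

open Real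

lemma abs_exp_sub_exp_le_exp_mul {x y M : ℝ} (hx : x ≤ M) (hy : y ≤ M) :
    |exp x - exp y| ≤ exp M * |x - y| := by
  wlog hyx : y ≤ x generalizing x y
  · rw [abs_sub_comm, abs_sub_comm x]
    exact this hy hx (le_of_not_ge hyx)
  have hy_ge : exp x * (y - x + 1) ≤ exp y :=
    calc exp x * (y - x + 1) ≤ exp x * exp (y - x) := by gcongr; exact add_one_le_exp _
      _ = exp y := by rw [← exp_add, add_sub_cancel]
  rw [abs_of_nonneg (sub_nonneg.2 (exp_le_exp.2 hyx)), abs_of_nonneg (sub_nonneg.2 hyx)]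
  calc exp x - exp y ≤ exp x * (x - y) := by linarith
    _ ≤ exp M * (x - y) := mul_le_mul_of_nonneg_right (exp_le_exp.2 hx) (sub_nonneg.2 hyx)

section GibbsDensity

variable {α : Type*} [MeasurableSpace α] {μ : Measure α} {u v : α → ℝ} {M ε : ℝ}

noncomputable def gibbsDensity (μ : Measure α) (u : α → ℝ) (x : α) : ℝ :=
  exp (u x) / ∫ y, exp (u y) ∂μ

lemma gibbsDensity_nonneg (μ : Measure α) (u : α → ℝ) (x : α) : 0 ≤ gibbsDensity μ u x :=
  div_nonneg (exp_pos _).le (integral_nonneg fun _ => (exp_pos _).le)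

lemma integrable_gibbsDensity (hu : Integrable (fun x => exp (u x)) μ) :
    Integrable (gibbsDensity μ u) μ :=
  hu.div_const _

lemma integral_gibbsDensity [NeZero μ] (hu : Integrable (fun x => exp (u x)) μ) :
    ∫ x, gibbsDensity μ u x ∂μ = 1 := by
  simp only [gibbsDensity]
  rw [integral_div, div_self (integral_exp_pos hu).ne']

lemma integral_log_gibbsDensity_mul [NeZero μ] (hu : Integrable (fun x => exp (u x)) μ)
    (hup : Integrable (fun x => u x * gibbsDensity μ u x) μ) :
    ∫ x, log (gibbsDensity μ u x) * gibbsDensity μ u x ∂μ =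
      ∫ x, u x * gibbsDensity μ u x ∂μ - log (∫ x, exp (u x) ∂μ) := by
  have hlog : ∀ x, log (gibbsDensity μ u x) = u x - log (∫ x, exp (u x) ∂μ) := fun x => by
    rw [gibbsDensity, log_div (exp_ne_zero _) (integral_exp_pos hu).ne', log_exp]
  simp only [hlog, sub_mul]
  rw [integral_sub hup ((integrable_gibbsDensity hu).const_mul _), integral_const_mul,
    integral_gibbsDensity hu, mul_one]

lemma integrable_exp_of_le [IsFiniteMeasure μ] (hu : AEStronglyMeasurable u μ)
    (hub : ∀ᵐ x ∂μ, u x ≤ M) : Integrable (fun x => exp (u x)) μ :=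
  .of_bound (continuous_exp.comp_aestronglyMeasurable hu) (exp M)
    (hub.mono fun x hx => by rw [norm_of_nonneg (exp_pos _).le]; exact exp_le_exp.2 hx)

lemma measureReal_univ_mul_exp_neg_le_integral_exp [IsFiniteMeasure μ]
    (hu : Integrable (fun x => exp (u x)) μ) (hub : ∀ᵐ x ∂μ, -M ≤ u x) :
    μ.real Set.univ * exp (-M) ≤ ∫ x, exp (u x) ∂μ :=
  calc μ.real Set.univ * exp (-M) = ∫ _, exp (-M) ∂μ := by rw [integral_const, smul_eq_mul]
    _ ≤ ∫ x, exp (u x) ∂μ :=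
      integral_mono_ae (integrable_const _) hu (hub.mono fun x hx => exp_le_exp.2 hx)

lemma integral_exp_le_exp_mul_integral_exp_s11 (hu : Integrable (fun x => exp (u x)) μ)
    (hv : Integrable (fun x => exp (v x)) μ) (hvu : ∀ᵐ x ∂μ, v x ≤ u x + ε) :
    ∫ x, exp (v x) ∂μ ≤ exp ε * ∫ x, exp (u x) ∂μ := by
  rw [← integral_const_mul]
  exact integral_mono_ae hv (hu.const_mul _) (hvu.mono fun x hx =>
    (exp_le_exp.2 (by linarith)).trans_eq (exp_add ε (u x)))

lemma abs_log_integral_exp_sub_le [NeZero μ] (hu : Integrable (fun x => exp (u x)) μ)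
    (hv : Integrable (fun x => exp (v x)) μ) (huv : ∀ᵐ x ∂μ, |u x - v x| ≤ ε) :
    |log (∫ x, exp (v x) ∂μ) - log (∫ x, exp (u x) ∂μ)| ≤ ε := by
  have hZu := integral_exp_pos hu
  have hZv := integral_exp_pos hv
  have hZv_le := log_le_log hZv (integral_exp_le_exp_mul_integral_exp_s11 hu hv
    (huv.mono fun x hx => by linarith [(abs_le.1 hx).1]))
  have hZu_le := log_le_log hZu (integral_exp_le_exp_mul_integral_exp_s11 hv hu
    (huv.mono fun x hx => by linarith [(abs_le.1 hx).2]))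
  rw [log_mul (exp_ne_zero _) hZu.ne', log_exp] at hZv_le
  rw [log_mul (exp_ne_zero _) hZv.ne', log_exp] at hZu_le
  rw [abs_sub_le_iff]
  constructor <;> linarith

lemma abs_integral_mul_gibbsDensity_le [NeZero μ] {w : α → ℝ}
    (hv : Integrable (fun x => exp (v x)) μ) (hw : ∀ᵐ x ∂μ, |w x| ≤ ε) :
    |∫ x, w x * gibbsDensity μ v x ∂μ| ≤ ε :=
  calc |∫ x, w x * gibbsDensity μ v x ∂μ| ≤ ∫ x, ε * gibbsDensity μ v x ∂μ :=
        norm_integral_le_of_norm_le (f := fun x => w x * gibbsDensity μ v x)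
          ((integrable_gibbsDensity hv).const_mul ε) (hw.mono fun x hx => by
            rw [norm_mul, norm_of_nonneg (gibbsDensity_nonneg μ v x), Real.norm_eq_abs]
            gcongr
            exact gibbsDensity_nonneg μ v x)
    _ = ε := by rw [integral_const_mul, integral_gibbsDensity hv, mul_one]

lemma integral_abs_gibbsDensity_sub_le [NeZero μ] (hu : Integrable (fun x => exp (u x)) μ)
    (hv : Integrable (fun x => exp (v x)) μ) :
    ∫ x, |gibbsDensity μ v x - gibbsDensity μ u x| ∂μ ≤
      2 * (∫ x, |exp (v x) - exp (u x)| ∂μ) / ∫ x, exp (v x) ∂μ := by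
  set Zu := ∫ x, exp (u x) ∂μ
  set Zv := ∫ x, exp (v x) ∂μ
  set D := ∫ x, |exp (v x) - exp (u x)| ∂μ
  have hZu : 0 < Zu := integral_exp_pos hu
  have hZv : 0 < Zv := integral_exp_pos hv
  have hZ : |Zv - Zu| ≤ D := by
    rw [← integral_sub hv hu]
    exact abs_integral_le_integral_abs
  have hD : Integrable (fun x => |exp (v x) - exp (u x)|) μ := (hv.sub hu).abs
  have hpt : ∀ x, |gibbsDensity μ v x - gibbsDensity μ u x| ≤
      |exp (v x) - exp (u x)| / Zv + exp (u x) * (|Zv - Zu| / (Zu * Zv)) := fun x => by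
    have hsplit : gibbsDensity μ v x - gibbsDensity μ u x =
        (exp (v x) - exp (u x)) / Zv + exp (u x) * ((Zu - Zv) / (Zu * Zv)) := by
      show exp (v x) / Zv - exp (u x) / Zu = _
      field_simp
      ring
    rw [hsplit]
    refine (abs_add_le _ _).trans_eq ?_
    rw [abs_div, abs_of_pos hZv, abs_mul, abs_of_pos (exp_pos _), abs_div,
      abs_of_pos (mul_pos hZu hZv), abs_sub_comm Zu]
  calc ∫ x, |gibbsDensity μ v x - gibbsDensity μ u x| ∂μ
      ≤ ∫ x, (|exp (v x) - exp (u x)| / Zv + exp (u x) * (|Zv - Zu| / (Zu * Zv))) ∂μ :=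
        integral_mono ((integrable_gibbsDensity hv).sub (integrable_gibbsDensity hu)).abs
          ((hD.div_const Zv).add (hu.mul_const _)) hpt
    _ = (D + |Zv - Zu|) / Zv := by
        rw [integral_add (hD.div_const Zv) (hu.mul_const _), integral_div,
          integral_mul_const]
        show D / Zv + Zu * (|Zv - Zu| / (Zu * Zv)) = _
        field_simp
    _ ≤ 2 * D / Zv := by gcongr; linarith

lemma integral_abs_gibbsDensity_sub_le_of_abs_le [IsFiniteMeasure μ] [NeZero μ]
    (hu : AEStronglyMeasurable u μ) (hv : AEStronglyMeasurable v μ)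
    (hub : ∀ᵐ x ∂μ, |u x| ≤ M) (hvb : ∀ᵐ x ∂μ, |v x| ≤ M)
    (huv : ∀ᵐ x ∂μ, |u x - v x| ≤ ε) :
    ∫ x, |gibbsDensity μ v x - gibbsDensity μ u x| ∂μ ≤ 2 * exp (2 * M) * ε := by
  have hexpu := integrable_exp_of_le hu (hub.mono fun _ => le_of_abs_le)
  have hexpv := integrable_exp_of_le hv (hvb.mono fun _ => le_of_abs_le)
  have hμ : 0 < μ.real Set.univ := measureReal_univ_pos
  have hD : ∫ x, |exp (v x) - exp (u x)| ∂μ ≤ μ.real Set.univ * (exp M * ε) := by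
    rw [← smul_eq_mul, ← integral_const]
    refine integral_mono_ae (hexpv.sub hexpu).abs (integrable_const _) ?_
    filter_upwards [hub, hvb, huv] with x hux hvx huvx
    rw [abs_sub_comm] at huvx
    exact (abs_exp_sub_exp_le_exp_mul (le_of_abs_le hvx) (le_of_abs_le hux)).trans
      (by gcongr)
  have hD0 : 0 ≤ ∫ x, |exp (v x) - exp (u x)| ∂μ := integral_nonneg fun _ => abs_nonneg _
  have hZv := measureReal_univ_mul_exp_neg_le_integral_exp hexpv
    (hvb.mono fun _ => neg_le_of_abs_le)
  calc ∫ x, |gibbsDensity μ v x - gibbsDensity μ u x| ∂μ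
      ≤ 2 * (∫ x, |exp (v x) - exp (u x)| ∂μ) / ∫ x, exp (v x) ∂μ :=
        integral_abs_gibbsDensity_sub_le hexpu hexpv
    _ ≤ 2 * (μ.real Set.univ * (exp M * ε)) / (μ.real Set.univ * exp (-M)) :=
        div_le_div₀ (by linarith) (by linarith) (by positivity) hZv
    _ = 2 * exp (2 * M) * ε := by
        rw [exp_neg, two_mul M, exp_add]
        field_simp

theorem abs_integral_log_gibbsDensity_mul_sub_le [IsFiniteMeasure μ] [NeZero μ]
    (hu : AEStronglyMeasurable u μ) (hv : AEStronglyMeasurable v μ)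
    (hub : ∀ᵐ x ∂μ, |u x| ≤ M) (hvb : ∀ᵐ x ∂μ, |v x| ≤ M)
    (huv : ∀ᵐ x ∂μ, |u x - v x| ≤ ε) :
    |(∫ x, log (gibbsDensity μ v x) * gibbsDensity μ v x ∂μ) -
        ∫ x, log (gibbsDensity μ u x) * gibbsDensity μ u x ∂μ| ≤
      2 * ε + 2 * M * exp (2 * M) * ε := by
  have hexpu := integrable_exp_of_le hu (hub.mono fun _ => le_of_abs_le)
  have hexpv := integrable_exp_of_le hv (hvb.mono fun _ => le_of_abs_le)
  set p := gibbsDensity μ u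
  set q := gibbsDensity μ v
  have hp : Integrable p μ := integrable_gibbsDensity hexpu
  have hq : Integrable q μ := integrable_gibbsDensity hexpv
  have hup : Integrable (fun x => u x * p x) μ := hp.bdd_mul hu hub
  have huq : Integrable (fun x => u x * q x) μ := hq.bdd_mul hu hub
  have hvq : Integrable (fun x => v x * q x) μ := hq.bdd_mul hv hvb
  have hM : 0 ≤ M := by
    obtain ⟨x, hx⟩ := hub.exists
    exact (abs_nonneg _).trans hx
  have hsplit : (∫ x, log (q x) * q x ∂μ) - ∫ x, log (p x) * p x ∂μ =
      (∫ x, (v x - u x) * q x ∂μ) + (∫ x, u x * (q x - p x) ∂μ) -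
        (log (∫ x, exp (v x) ∂μ) - log (∫ x, exp (u x) ∂μ)) := by
    rw [integral_log_gibbsDensity_mul hexpv hvq, integral_log_gibbsDensity_mul hexpu hup]
    simp only [sub_mul, mul_sub]
    rw [integral_sub hvq huq, integral_sub huq hup]
    ring
  have hpotential : |∫ x, (v x - u x) * q x ∂μ| ≤ ε :=
    abs_integral_mul_gibbsDensity_le hexpv (huv.mono fun x hx => by rwa [abs_sub_comm])
  have hdensity : |∫ x, u x * (q x - p x) ∂μ| ≤ M * (2 * exp (2 * M) * ε) :=
    calc |∫ x, u x * (q x - p x) ∂μ| ≤ ∫ x, M * |q x - p x| ∂μ :=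
          norm_integral_le_of_norm_le (f := fun x => u x * (q x - p x))
            ((hq.sub hp).abs.const_mul M) (hub.mono fun x hx => by
            rw [norm_mul, Real.norm_eq_abs, Real.norm_eq_abs]
            gcongr)
      _ ≤ M * (2 * exp (2 * M) * ε) := by
          rw [integral_const_mul]
          gcongr
          exact integral_abs_gibbsDensity_sub_le_of_abs_le hu hv hub hvb huv
  have hpartition := abs_log_integral_exp_sub_le hexpu hexpv huv
  rw [hsplit]
  calc _ ≤ |∫ x, (v x - u x) * q x ∂μ| + |∫ x, u x * (q x - p x) ∂μ| +
        |log (∫ x, exp (v x) ∂μ) - log (∫ x, exp (u x) ∂μ)| :=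
        (abs_sub _ _).trans (add_le_add (abs_add_le _ _) le_rfl)
    _ ≤ 2 * ε + 2 * M * exp (2 * M) * ε := by linarith

end GibbsDensity

theorem stmt11_general {m d : ℕ}
    (𝒜 : Set (EuclideanSpace ℝ (Fin m)))
    (h𝒜 : IsCompact 𝒜) (h𝒜0 : 0 < volume 𝒜) (h𝒜fin : volume 𝒜 < ⊤)
    (γ C B R : ℝ) (hγ : 0 < γ) (hB : 0 < B)
    (f g : EuclideanSpace ℝ (Fin m) → EuclideanSpace ℝ (Fin d))
    (r : EuclideanSpace ℝ (Fin m) → ℝ)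
    (hf : Measurable f) (hg : Measurable g) (hr : Measurable r)
    (hfB : ∀ a ∈ 𝒜, ‖f a‖ ≤ B) (hgB : ∀ a ∈ 𝒜, ‖g a‖ ≤ B)
    (hrR : ∀ a ∈ 𝒜, |r a| ≤ R)
    (z' : EuclideanSpace ℝ (Fin d)) (hz' : ‖z'‖ ≤ C) :
    γ * |(∫ a in 𝒜, Real.log (gibbs 𝒜 γ g r z' a) * gibbs 𝒜 γ g r z' a) -
          ∫ a in 𝒜, Real.log (gibbs 𝒜 γ f r z' a) * gibbs 𝒜 γ f r z' a| ≤
      2 * (1 + (B * C + R) / γ * Real.exp (2 * (B * C + R) / γ)) *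
        sSup ((fun a => |⟪f a - g a, z'⟫|) '' 𝒜) := by
  have : IsFiniteMeasure (volume.restrict 𝒜) := isFiniteMeasure_restrict.2 h𝒜fin.ne
  have : NeZero (volume.restrict 𝒜) := ⟨Measure.restrict_eq_zero.not.2 h𝒜0.ne'⟩
  have h𝒜m := h𝒜.measurableSet
  have hinner : ∀ {x : EuclideanSpace ℝ (Fin d)}, ‖x‖ ≤ B → |⟪x, z'⟫| ≤ B * C := fun hx =>
    (abs_real_inner_le_norm _ _).trans (mul_le_mul hx hz' (norm_nonneg _) hB.le)
  have hexponent : ∀ h : EuclideanSpace ℝ (Fin m) → EuclideanSpace ℝ (Fin d),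
      (∀ a ∈ 𝒜, ‖h a‖ ≤ B) →
        ∀ᵐ a ∂volume.restrict 𝒜, |(⟪h a, z'⟫ + r a) / γ| ≤ (B * C + R) / γ :=
    fun h hh => ae_restrict_of_forall_mem h𝒜m fun a ha => by
      rw [abs_div, abs_of_pos hγ]
      gcongr
      exact (abs_add_le _ _).trans (add_le_add (hinner (hh a ha)) (hrR a ha))
  have hbdd : BddAbove ((fun a => |⟪f a - g a, z'⟫|) '' 𝒜) :=
    ⟨B * C + B * C, Set.forall_mem_image.2 fun a ha => by
      rw [inner_sub_left]
      exact (abs_sub _ _).trans (add_le_add (hinner (hfB a ha)) (hinner (hgB a ha)))⟩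
  set S := sSup ((fun a => |⟪f a - g a, z'⟫|) '' 𝒜)
  have hdiff : ∀ᵐ a ∂volume.restrict 𝒜,
      |(⟪f a, z'⟫ + r a) / γ - (⟪g a, z'⟫ + r a) / γ| ≤ S / γ :=
    ae_restrict_of_forall_mem h𝒜m fun a ha => by
      rw [← sub_div, add_sub_add_right_eq_sub, ← inner_sub_left, abs_div, abs_of_pos hγ]
      gcongr
      exact le_csSup hbdd ⟨a, ha, rfl⟩
  calc _ ≤ γ * (2 * (S / γ) + 2 * ((B * C + R) / γ) * exp (2 * ((B * C + R) / γ)) * (S / γ)) :=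
        mul_le_mul_of_nonneg_left (abs_integral_log_gibbsDensity_mul_sub_le
          (((hf.inner measurable_const).add hr).div_const γ).aestronglyMeasurable
          (((hg.inner measurable_const).add hr).div_const γ).aestronglyMeasurable
          (hexponent f hfB) (hexponent g hgB) hdiff) hγ.le
    _ = 2 * (1 + (B * C + R) / γ * exp (2 * (B * C + R) / γ)) * S := by
        rw [mul_div_assoc 2 (B * C + R)]
        field_simp

theorem stmt11 {m d : ℕ}
    (𝒜 : Set (EuclideanSpace ℝ (Fin m)))
    (h𝒜 : IsCompact 𝒜) (h𝒜0 : 0 < volume 𝒜) (h𝒜fin : volume 𝒜 < ⊤)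
    (γ C B R : ℝ) (hγ : 0 < γ) (hC : 0 < C) (hB : 0 < B) (hR : 0 < R)
    (f g : EuclideanSpace ℝ (Fin m) → EuclideanSpace ℝ (Fin d))
    (r : EuclideanSpace ℝ (Fin m) → ℝ)
    (hf : Measurable f) (hg : Measurable g) (hr : Measurable r)
    (hfB : ∀ a ∈ 𝒜, ‖f a‖ ≤ B) (hgB : ∀ a ∈ 𝒜, ‖g a‖ ≤ B)
    (hrR : ∀ a ∈ 𝒜, |r a| ≤ R)
    (z' : EuclideanSpace ℝ (Fin d)) (hz' : ‖z'‖ ≤ C) :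
    γ * |(∫ a in 𝒜, Real.log (gibbs 𝒜 γ g r z' a) * gibbs 𝒜 γ g r z' a) -
          ∫ a in 𝒜, Real.log (gibbs 𝒜 γ f r z' a) * gibbs 𝒜 γ f r z' a| ≤
      2 * (1 + (B * C + R) / γ * Real.exp (2 * (B * C + R) / γ)) *
        sSup ((fun a => |⟪f a - g a, z'⟫|) '' 𝒜) :=
  stmt11_general 𝒜 h𝒜 h𝒜0 h𝒜fin γ C B R hγ hB f g r hf hg hr hfB hgB hrR z' hz'
end

section
/- For all nonzero real numbers φ, φ' and every a ∈ [0,1]: |q^φ(a) − q^{φ'}(a)| ≤ 2|φ − φ'|; that is, the family {q^φ} is uniformly 2-Lipschitz in the parameter φ with respect to the sup-norm on [0,1]. -/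
/-!
Up to sign, `log (φ / (e^φ - 1))` is the log-partition function `A φ = log ∫₀¹ e^{φa} da` of the
exponential family `a ↦ e^{φa}` on `[0, 1]`, so `q^φ(a) = φ a - A φ`. The derivative of `A` is the
mean of that family, which lies in `[0, 1]`; hence `A` and `φ ↦ φ - A φ` are both monotone, `A` is
`1`-Lipschitz, and the linear term `φ a` contributes the other `|φ - φ'|`.
-/

/-- `q^φ(a) = φ a + log(φ/(e^φ − 1))` for `φ ≠ 0`. -/
noncomputable def qFun (φ a : ℝ) : ℝ :=
  φ * a + Real.log (φ / (Real.exp φ - 1))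

open Real Set Filter Topology

theorem monotone_of_deriv_nonneg_of_ne {f : ℝ → ℝ} {c : ℝ} (hf : Continuous f)
    (hdiff : ∀ x ≠ c, DifferentiableAt ℝ f x) (hderiv : ∀ x ≠ c, 0 ≤ deriv f x) :
    Monotone f := by
  have side : ∀ D : Set ℝ, Convex ℝ D → c ∉ interior D → MonotoneOn f D := fun D hD hc =>
    monotoneOn_of_deriv_nonneg hD hf.continuousOn
      (fun x hx => (hdiff x (ne_of_mem_of_not_mem hx hc)).differentiableWithinAt)
      (fun x hx => hderiv x (ne_of_mem_of_not_mem hx hc))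
  refine MonotoneOn.Iic_union_Ici (a := c) ?_ ?_
  · exact side _ (convex_Iic c) (by simp)
  · exact side _ (convex_Ici c) (by simp)

theorem lipschitzWith_one_of_monotone_of_monotone_sub {f : ℝ → ℝ} (hf : Monotone f)
    (hsub : Monotone fun x => x - f x) : LipschitzWith 1 f := by
  refine LipschitzWith.of_le_add fun x y => ?_
  rw [Real.dist_eq]
  rcases le_total x y with hxy | hyx
  · linarith [hf hxy, abs_nonneg (x - y)]
  · linarith [hsub hyx, le_abs_self (x - y)]

/-- `log ((e^φ - 1) / φ) = log ∫₀¹ e^{φa} da`. At `φ = 0` Lean's `0 / 0 = 0` and `log 0 = 0`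
give the value `0`, which is the continuous extension. -/
noncomputable def logPartition (φ : ℝ) : ℝ :=
  Real.log ((Real.exp φ - 1) / φ)

theorem qFun_eq_mul_sub_logPartition (φ a : ℝ) : qFun φ a = φ * a - logPartition φ := by
  rw [qFun, logPartition, ← inv_div, Real.log_inv]
  ring

theorem mul_exp_sub_one_pos {x : ℝ} (hx : x ≠ 0) : 0 < x * (Real.exp x - 1) := by
  rcases hx.lt_or_gt with h | h
  · exact mul_pos_of_neg_of_neg h (sub_neg.2 (Real.exp_lt_one_iff.2 h))
  · exact mul_pos h (sub_pos.2 (Real.one_lt_exp_iff.2 h))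

theorem hasDerivAt_logPartition {x : ℝ} (hx : x ≠ 0) :
    HasDerivAt logPartition ((x * Real.exp x - Real.exp x + 1) / (x * (Real.exp x - 1))) x := by
  have hpos := mul_exp_sub_one_pos hx
  have hE : Real.exp x - 1 ≠ 0 := right_ne_zero_of_mul hpos.ne'
  have hquot : HasDerivAt (fun y => (Real.exp y - 1) / y)
      ((Real.exp x * x - (Real.exp x - 1) * 1) / x ^ 2) x :=
    ((Real.hasDerivAt_exp x).sub_const 1).div (hasDerivAt_id' x) hx
  refine (hquot.log (div_ne_zero hE hx)).congr_deriv ?_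
  field_simp
  ring

theorem deriv_logPartition_mem_Icc {x : ℝ} (hx : x ≠ 0) :
    deriv logPartition x ∈ Icc (0 : ℝ) 1 := by
  rw [(hasDerivAt_logPartition hx).deriv]
  have hpos := mul_exp_sub_one_pos hx
  have hnum : 0 ≤ x * Real.exp x - Real.exp x + 1 := by
    have hexp_neg : Real.exp x * Real.exp (-x) = 1 := by
      rw [← Real.exp_add, add_neg_cancel, exp_zero]
    nlinarith [Real.add_one_le_exp (-x), Real.exp_pos x]
  have hle : x * Real.exp x - Real.exp x + 1 ≤ x * (Real.exp x - 1) := by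
    nlinarith [Real.add_one_le_exp x]
  exact ⟨div_nonneg hnum hpos.le, (div_le_one hpos).2 hle⟩

theorem continuous_logPartition : Continuous logPartition := by
  refine continuous_iff_continuousAt.2 fun x => ?_
  rcases eq_or_ne x 0 with rfl | hx
  · have hslope : Tendsto (fun y => (Real.exp y - 1) / y) (𝓝[≠] 0) (𝓝 1) := by
      refine (hasDerivAt_iff_tendsto_slope.1 (by simpa using Real.hasDerivAt_exp 0)).congr
        fun y => ?_
      simp [slope_def_field]
    have h0 : logPartition 0 = Real.log 1 := by simp [logPartition]
    rw [← continuousWithinAt_compl_self, ContinuousWithinAt, h0]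
    exact (Real.continuousAt_log one_ne_zero).tendsto.comp hslope
  · exact (hasDerivAt_logPartition hx).continuousAt

theorem lipschitzWith_logPartition : LipschitzWith 1 logPartition := by
  have hA : ∀ x ≠ 0, HasDerivAt logPartition (deriv logPartition x) x :=
    fun x hx => (hasDerivAt_logPartition hx).differentiableAt.hasDerivAt
  have hsub : ∀ x ≠ 0, HasDerivAt (fun y => y - logPartition y) (1 - deriv logPartition x) x :=
    fun x hx => (hasDerivAt_id' x).sub (hA x hx)
  refine lipschitzWith_one_of_monotone_of_monotone_sub ?_ ?_
  · exact monotone_of_deriv_nonneg_of_ne continuous_logPartition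
      (fun x hx => (hA x hx).differentiableAt) fun x hx => (deriv_logPartition_mem_Icc hx).1
  · refine monotone_of_deriv_nonneg_of_ne (continuous_id'.sub continuous_logPartition)
      (fun x hx => (hsub x hx).differentiableAt) fun x hx => ?_
    rw [(hsub x hx).deriv, sub_nonneg]
    exact (deriv_logPartition_mem_Icc hx).2

theorem stmt18_general (φ φ' : ℝ)
    (a : ℝ) (ha : a ∈ Set.Icc (0 : ℝ) 1) :
    |qFun φ a - qFun φ' a| ≤ 2 * |φ - φ'| := by
  have hA : |logPartition φ - logPartition φ'| ≤ |φ - φ'| := by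
    simpa [Real.dist_eq] using lipschitzWith_logPartition.dist_le_mul φ φ'
  have hlin : |(φ - φ') * a| ≤ |φ - φ'| := by
    rw [abs_mul, abs_of_nonneg ha.1]
    exact mul_le_of_le_one_right (abs_nonneg _) ha.2
  calc |qFun φ a - qFun φ' a|
      = |(φ - φ') * a - (logPartition φ - logPartition φ')| := by
        rw [qFun_eq_mul_sub_logPartition, qFun_eq_mul_sub_logPartition]; ring_nf
    _ ≤ |(φ - φ') * a| + |logPartition φ - logPartition φ'| := abs_sub _ _
    _ ≤ 2 * |φ - φ'| := by linarith

theorem stmt18 (φ φ' : ℝ) (hφ : φ ≠ 0) (hφ' : φ' ≠ 0)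
    (a : ℝ) (ha : a ∈ Set.Icc (0 : ℝ) 1) :
    |qFun φ a - qFun φ' a| ≤ 2 * |φ - φ'| :=
  stmt18_general φ φ' a ha
end
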